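/- arXiv:2211.13798 — 2 statements merged into one kernel-verified Lean document; each statement's English description precedes it below -/
import Mathlib

section
/- Let n ≥ 2, let γ > 0 and f > 0 be real numbers, and let d : Fin n → ℝ satisfy d j > 0 for every j and ∏_{j} d j ≥ γ. Set μ j := d j / f. Then ∏_{j=0}^{n-1} ( (1/(n−1)) ∑_{k ≠ j} μ k ) ≥ γ / f^n. -/
/-!
By AM-GM, the `j`-th factor `(1/(n-1)) ∑_{k ≠ j} μ k` is at least the geometric mean of the
`n - 1` numbers `μ k`, `k ≠ j`. Each `μ k` is left out of exactly one of these `n` geometric means,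
so the product of these geometric means is `∏ μ = (∏ d) / f ^ n ≥ γ / f ^ n`.
-/

open Finset

theorem Real.prod_le_arith_mean_pow {ι : Type*} {s : Finset ι} (hs : s.Nonempty) {z : ι → ℝ}
    (hz : ∀ i ∈ s, 0 ≤ z i) : ∏ i ∈ s, z i ≤ ((∑ i ∈ s, z i) / #s) ^ #s := by
  have hcard : (0 : ℝ) < #s := by exact_mod_cast hs.card_pos
  have hamgm := Real.geom_mean_le_arith_mean s (fun _ ↦ 1) z (fun _ _ ↦ zero_le_one)
    (by simpa using hcard) hz
  simp only [Real.rpow_one, sum_const, nsmul_eq_mul, mul_one, one_mul] at hamgm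
  have hprod : 0 ≤ ∏ i ∈ s, z i := prod_nonneg hz
  calc ∏ i ∈ s, z i = ((∏ i ∈ s, z i) ^ ((#s : ℝ)⁻¹)) ^ #s := by
        rw [← Real.rpow_mul_natCast hprod, inv_mul_cancel₀ hcard.ne', Real.rpow_one]
    _ ≤ _ := pow_le_pow_left₀ (Real.rpow_nonneg hprod _) hamgm _

theorem Finset.prod_prod_erase_eq_pow {ι M : Type*} [Fintype ι] [DecidableEq ι] [CommMonoid M]
    (x : ι → M) : ∏ j, ∏ k ∈ univ.erase j, x k = (∏ k, x k) ^ (Fintype.card ι - 1) := by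
  calc ∏ j, ∏ k ∈ univ.erase j, x k = ∏ k, ∏ j ∈ univ.erase k, x k := by
        simp_rw [← filter_ne', prod_filter]
        exact prod_comm.trans (prod_congr rfl fun k _ ↦ prod_congr rfl fun j _ ↦ by simp [eq_comm])
    _ = _ := by simp [prod_pow, card_erase_of_mem]

theorem Real.prod_le_prod_mean_erase {ι : Type*} [Fintype ι] [DecidableEq ι]
    (hι : 2 ≤ Fintype.card ι) {x : ι → ℝ} (hx : ∀ i, 0 ≤ x i) :
    ∏ i, x i ≤ ∏ j, 1 / ((Fintype.card ι : ℝ) - 1) * ∑ k ∈ univ.erase j, x k := by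
  set m := Fintype.card ι - 1 with hm
  have hcard_erase (j : ι) : #(univ.erase j) = m := by
    rw [card_erase_of_mem (mem_univ j), card_univ]
  have hmean (j : ι) : 1 / ((Fintype.card ι : ℝ) - 1) * ∑ k ∈ univ.erase j, x k
      = (∑ k ∈ univ.erase j, x k) / #(univ.erase j) := by
    rw [hcard_erase, hm, Nat.cast_sub (by omega)]
    ring
  simp_rw [hmean]
  refine le_of_pow_le_pow_left₀ (n := m) (by omega)
    (prod_nonneg fun j _ ↦ div_nonneg (sum_nonneg fun k _ ↦ hx k) (Nat.cast_nonneg _)) ?_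
  calc (∏ i, x i) ^ m = ∏ j, ∏ k ∈ univ.erase j, x k := (prod_prod_erase_eq_pow x).symm
    _ ≤ ∏ j, ((∑ k ∈ univ.erase j, x k) / #(univ.erase j)) ^ #(univ.erase j) := by
        refine prod_le_prod (fun j _ ↦ prod_nonneg fun k _ ↦ hx k) fun j _ ↦ ?_
        refine prod_le_arith_mean_pow ?_ fun k _ ↦ hx k
        rw [← card_pos, hcard_erase]
        omega
    _ = (∏ j, (∑ k ∈ univ.erase j, x k) / #(univ.erase j)) ^ m := by
        simp only [hcard_erase, prod_pow]

theorem det_Theta_ge_gamma_div_f_pow_general (n : ℕ) (hn : 2 ≤ n) (γ f : ℝ)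
    (hf : 0 < f) (d : Fin n → ℝ) (hd : ∀ j, 0 < d j)
    (hprod : ∏ j : Fin n, d j ≥ γ) :
    ∏ j : Fin n, ((1 / ((n : ℝ) - 1)) * ∑ k ∈ Finset.univ.erase j, (d k / f)) ≥
      γ / f ^ n := by
  have hmean := Real.prod_le_prod_mean_erase (by simpa using hn)
    (x := fun k ↦ d k / f) fun k ↦ (div_pos (hd k) hf).le
  rw [Fintype.card_fin, prod_div_distrib, prod_const, card_univ, Fintype.card_fin] at hmean
  exact (div_le_div_of_nonneg_right hprod (pow_nonneg hf.le n)).trans hmean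

theorem det_Theta_ge_gamma_div_f_pow (n : ℕ) (hn : 2 ≤ n) (γ f : ℝ)
    (hγ : 0 < γ) (hf : 0 < f) (d : Fin n → ℝ) (hd : ∀ j, 0 < d j)
    (hprod : ∏ j : Fin n, d j ≥ γ) :
    ∏ j : Fin n, ((1 / ((n : ℝ) - 1)) * ∑ k ∈ Finset.univ.erase j, (d k / f)) ≥
      γ / f ^ n :=
  det_Theta_ge_gamma_div_f_pow_general n hn γ f hf d hd hprod
end

section
/- Let n ≥ 2 and let G be an n×n complex Hermitian positive definite matrix. Set Θ := (1/(n−1)) ( (trace G) • (identity matrix) − G ). Then det Θ and det G are positive real numbers and det Θ ≥ det G. -/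
open Matrix ComplexOrder Finset

-- real AM-GM based key inequality
lemma key_ineq (n : ℕ) (hn : 2 ≤ n) (μ : Fin n → ℝ) (hμ : ∀ i, 0 < μ i) :
    ∏ i, μ i ≤ ∏ i, (∑ k, μ k - μ i) / ((n : ℝ) - 1) := by
  have hn1 : (0:ℝ) < (n:ℝ) - 1 := by
    have : (2:ℝ) ≤ n := by exact_mod_cast hn
    linarith
  set w : ℝ := ((n:ℝ) - 1)⁻¹ with hw
  have hwpos : 0 < w := inv_pos.mpr hn1
  have hg : ∀ i : Fin n, (0:ℝ) < μ i ^ w := fun i => Real.rpow_pos_of_pos (hμ i) w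
  set g : Fin n → ℝ := fun k => μ k ^ w with hgdef
  have hcard : ∀ i : Fin n, (Finset.univ.erase i).card = n - 1 := fun i => by
    rw [Finset.card_erase_of_mem (Finset.mem_univ i), Finset.card_univ, Fintype.card_fin]
  have step1 : ∀ i : Fin n, ∏ k ∈ Finset.univ.erase i, g k ≤ (∑ k, μ k - μ i) / ((n:ℝ) - 1) := by
    intro i
    have h := Real.geom_mean_le_arith_mean_weighted (Finset.univ.erase i) (fun _ => w) μ
      (fun _ _ => hwpos.le) ?_ (fun k _ => (hμ k).le)
    · calc ∏ k ∈ Finset.univ.erase i, g k ≤ ∑ k ∈ Finset.univ.erase i, w * μ k := h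
        _ = (∑ k, μ k - μ i) / ((n:ℝ) - 1) := by
            rw [← Finset.mul_sum, Finset.sum_erase_eq_sub (Finset.mem_univ i)]
            rw [div_eq_inv_mul]
    · rw [Finset.sum_const, hcard i, nsmul_eq_mul]
      have : ((n:ℝ) - 1) = ((n - 1 : ℕ) : ℝ) := by
        have : (1:ℕ) ≤ n := by omega
        push_cast [this]; ring
      rw [← this, hw, mul_inv_cancel₀ (ne_of_gt hn1)]
  have step2 : ∏ i, ∏ k ∈ Finset.univ.erase i, g k = ∏ i, μ i := by
    have hQ : ∀ i : Fin n, ∏ k ∈ Finset.univ.erase i, g k = (∏ k, g k) / g i := by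
      intro i
      rw [eq_div_iff (ne_of_gt (hg i)), Finset.prod_erase_mul _ _ (Finset.mem_univ i)]
    simp_rw [hQ]
    rw [Finset.prod_div_distrib, Finset.prod_const, Finset.card_univ, Fintype.card_fin]
    have hQpos : 0 < ∏ k, g k := Finset.prod_pos (fun k _ => hg k)
    have hpow : (∏ k, g k) ^ n / (∏ k, g k) = (∏ k, g k) ^ (n - 1) := by
      rw [div_eq_iff (ne_of_gt hQpos), ← pow_succ]
      congr 1; omega
    rw [hpow, ← Finset.prod_pow]
    refine Finset.prod_congr rfl fun k _ => ?_
    rw [hgdef, ← Real.rpow_natCast (μ k ^ w) (n-1), ← Real.rpow_mul (hμ k).le]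
    have : w * ((n:ℝ) - 1) = 1 := inv_mul_cancel₀ (ne_of_gt hn1)
    have hcast : ((n - 1 : ℕ) : ℝ) = (n:ℝ) - 1 := by
      have : (1:ℕ) ≤ n := by omega
      push_cast [this]; ring
    rw [hcast, this, Real.rpow_one]
  calc ∏ i, μ i = ∏ i, ∏ k ∈ Finset.univ.erase i, g k := step2.symm
    _ ≤ ∏ i, (∑ k, μ k - μ i) / ((n:ℝ) - 1) :=
        Finset.prod_le_prod (fun i _ => Finset.prod_nonneg fun k _ => (hg k).le)
          (fun i _ => step1 i)

theorem det_theta_ge_det_G (n : ℕ) (hn : 2 ≤ n) (G : Matrix (Fin n) (Fin n) ℂ)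
    (hG : G.PosDef) :
    let Θ : Matrix (Fin n) (Fin n) ℂ :=
      ((1 : ℂ) / ((n : ℂ) - 1)) •
        ((Matrix.trace G) • (1 : Matrix (Fin n) (Fin n) ℂ) - G)
    (Θ.det).im = 0 ∧ 0 < (Θ.det).re ∧ (G.det).im = 0 ∧ 0 < (G.det).re ∧
      (G.det).re ≤ (Θ.det).re := by
  intro Θ
  have hH := hG.isHermitian
  set μ : Fin n → ℝ := hH.eigenvalues with hμdef
  have hμpos : ∀ i, 0 < μ i := hG.eigenvalues_pos
  set S : ℝ := ∑ k, μ k with hS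
  set U : Matrix (Fin n) (Fin n) ℂ := (hH.eigenvectorUnitary : Matrix (Fin n) (Fin n) ℂ) with hU
  have hUU : U * star U = 1 := Matrix.mem_unitaryGroup_iff.mp hH.eigenvectorUnitary.2
  -- trace
  have htr : Matrix.trace G = (S : ℂ) := by
    conv_lhs => rw [hH.spectral_theorem, Unitary.conjStarAlgAut_apply]
    rw [Matrix.trace_mul_cycle]
    rw [Unitary.coe_star_mul_self, Matrix.one_mul, Matrix.trace_diagonal]
    push_cast [hS]
    rfl
  -- det G
  have hdetG : G.det = ((∏ i, μ i : ℝ) : ℂ) := by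
    rw [hH.det_eq_prod_eigenvalues]; push_cast; rfl
  -- det of trace•1 - G
  have hM : (Matrix.trace G) • (1 : Matrix (Fin n) (Fin n) ℂ) - G
      = U * Matrix.diagonal (fun i => ((S - μ i : ℝ) : ℂ)) * star U := by
    rw [htr]
    conv_lhs => rw [hH.spectral_theorem, Unitary.conjStarAlgAut_apply]
    have h1 : (S:ℂ) • (1 : Matrix (Fin n) (Fin n) ℂ) = U * ((S:ℂ) • 1) * star U := by
      rw [Matrix.mul_smul, Matrix.smul_mul, Matrix.mul_one, hUU]
    rw [h1, ← Matrix.sub_mul, ← Matrix.mul_sub]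
    congr 1
    rw [Matrix.smul_one_eq_diagonal, Matrix.diagonal_sub]
    congr 1
    ext i
    push_cast
    rfl
  have hdetM : ((Matrix.trace G) • (1 : Matrix (Fin n) (Fin n) ℂ) - G).det
      = ((∏ i, (S - μ i) : ℝ) : ℂ) := by
    rw [hM, Matrix.det_mul, Matrix.det_mul, mul_comm U.det, mul_assoc, ← Matrix.det_mul, hUU,
      Matrix.det_one, mul_one, Matrix.det_diagonal]
    push_cast; rfl
  have hn1 : (0:ℝ) < (n:ℝ) - 1 := by
    have : (2:ℝ) ≤ n := by exact_mod_cast hn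
    linarith
  have hc : ((1:ℂ) / ((n:ℂ) - 1)) = (((1 / ((n:ℝ) - 1)) : ℝ) : ℂ) := by push_cast; ring
  have hdetΘ : Θ.det = ((∏ i, (S - μ i) / ((n:ℝ) - 1) : ℝ) : ℂ) := by
    show (((1 : ℂ) / ((n : ℂ) - 1)) •
        ((Matrix.trace G) • (1 : Matrix (Fin n) (Fin n) ℂ) - G)).det = _
    rw [Matrix.det_smul, hdetM, hc, Fintype.card_fin]
    push_cast
    rw [Finset.prod_div_distrib, Finset.prod_const, Finset.card_univ, Fintype.card_fin]
    ring
  -- positivity of factors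
  have hfac : ∀ i, 0 < (S - μ i) / ((n:ℝ) - 1) := by
    intro i
    apply div_pos _ hn1
    rw [hS, ← Finset.sum_erase_eq_sub (Finset.mem_univ i)]
    apply Finset.sum_pos (fun k _ => hμpos k)
    have hc1 : 1 < (Finset.univ : Finset (Fin n)).card := by
      rw [Finset.card_univ, Fintype.card_fin]; omega
    obtain ⟨j, hj⟩ := Finset.exists_mem_ne hc1 i
    exact ⟨j, Finset.mem_erase.mpr ⟨hj.2, Finset.mem_univ j⟩⟩
  have hΘpos : 0 < ∏ i, (S - μ i) / ((n:ℝ) - 1) := Finset.prod_pos fun i _ => hfac i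
  have hGpos : 0 < ∏ i, μ i := Finset.prod_pos fun i _ => hμpos i
  refine ⟨by rw [hdetΘ]; exact Complex.ofReal_im _,
    by rw [hdetΘ, Complex.ofReal_re]; exact hΘpos,
    by rw [hdetG]; exact Complex.ofReal_im _,
    by rw [hdetG, Complex.ofReal_re]; exact hGpos, ?_⟩
  rw [hdetG, hdetΘ, Complex.ofReal_re, Complex.ofReal_re]
  exact key_ineq n hn μ hμpos
end
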